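/- arXiv:1811.04558 — 4 statements merged into one kernel-verified Lean document; each statement's English description precedes it below -/
import Mathlib

section
/- Let C : ℝ → (nonempty closed subsets of ℝⁿ) be Lipschitz continuous with constant L_C with respect to the Hausdorff distance, let each C(t) be η-prox-regular, let f : ℝ × ℝⁿ → ℝⁿ satisfy ‖f(t₁,x₁) − f(t₂,x₂)‖ ≤ L_f|t₁ − t₂| + L_f‖x₁ − x₂‖, let ‖f(t,x)‖ ≤ M_f for all t ∈ ℝ and all x ∈ ⋃_{t∈ℝ} C(t), and let f be strongly monotone with constant α > 0, i.e. ⟨f(t,x₁) − f(t,x₂), x₁ − x₂⟩ ≥ α‖x₁ − x₂‖² for all t, x₁, x₂. Then any two solutions x₁, x₂ of the sweeping process −ẋ ∈ N(C(t),x) + f(t,x) defined on [τ,∞) with x₁(τ), x₂(τ) ∈ C(τ) and satisfying ‖ẋᵢ(t) + f(t,xᵢ(t))‖ ≤ M_f + L_C for a.e. t > τ (i = 1,2) obey ‖x₁(t) − x₂(t)‖ ≤ e^{ᾱ(t−τ)}‖x₁(τ) − x₂(τ)‖ for all t > τ, where ᾱ = (M_f + L_C − ηα)/η. -/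
noncomputable section
open MeasureTheory Metric Set Filter
open scoped RealInnerProductSpace

/-- The proximal normal cone to a set `C` at a point `x`: vectors `v` such that `x` is a
nearest point of `C` to `x + a • v` for some `a > 0`. -/
def proxNormalCone {n : ℕ} (C : Set (EuclideanSpace ℝ (Fin n)))
    (x : EuclideanSpace ℝ (Fin n)) : Set (EuclideanSpace ℝ (Fin n)) :=
  {v | ∃ a : ℝ, 0 < a ∧ ∀ c ∈ C, dist (x + a • v) x ≤ dist (x + a • v) c}

/-- A closed set `C` is `η`-prox-regular if every proximal normal `v` with `‖v‖ ≤ η` at `x ∈ C`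
satisfies `⟪v, y - x⟫ ≤ (‖v‖/(2η)) ‖y - x‖²` for all `y ∈ C`. -/
def IsProxRegular {n : ℕ} (η : ℝ) (C : Set (EuclideanSpace ℝ (Fin n))) : Prop :=
  ∀ x ∈ C, ∀ v ∈ proxNormalCone C x, ‖v‖ ≤ η →
    ∀ y ∈ C, ⟪v, y - x⟫ ≤ (‖v‖ / (2 * η)) * ‖y - x‖ ^ 2

/-- `x` is an (absolutely continuous) solution of the perturbed sweeping process
`-ẋ ∈ N(C(t),x) + f(t,x)` on the set `I`, with a.e. derivative `xd`: `x` takes values in the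
moving set, is the integral of the locally integrable function `xd`, and the differential
inclusion holds almost everywhere on `I`. -/
def IsSweepingSolutionOn {n : ℕ} (C : ℝ → Set (EuclideanSpace ℝ (Fin n)))
    (f : ℝ → EuclideanSpace ℝ (Fin n) → EuclideanSpace ℝ (Fin n))
    (x xd : ℝ → EuclideanSpace ℝ (Fin n)) (I : Set ℝ) : Prop :=
  (∀ t ∈ I, x t ∈ C t) ∧
  LocallyIntegrableOn xd I ∧
  (∀ s ∈ I, ∀ t ∈ I, x t - x s = ∫ u in s..t, xd u) ∧
  (∀ᵐ t ∂(volume : Measure ℝ), t ∈ I → -xd t - f t (x t) ∈ proxNormalCone (C t) (x t))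

/-!
For `g = x₁ - x₂`, hypomonotonicity of the proximal normal cone of an `η`-prox-regular set
together with strong monotonicity of `f` gives
`⟪ġ, g⟫ ≤ ᾱ ‖g‖²` almost everywhere. Since `‖g‖²` is absolutely continuous, the function
`e^{-2ᾱt} ‖g t‖²` has an a.e. nonpositive derivative and is therefore nonincreasing.
-/

theorem AbsolutelyContinuousOnInterval.of_dist_le_mul {X Y : Type*} [PseudoMetricSpace X]
    [PseudoMetricSpace Y] {f : ℝ → X} {g : ℝ → Y} {a b K : ℝ}
    (hg : AbsolutelyContinuousOnInterval g a b)
    (h : ∀ x ∈ uIcc a b, ∀ y ∈ uIcc a b, dist (f x) (f y) ≤ K * dist (g x) (g y)) :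
    AbsolutelyContinuousOnInterval f a b := by
  unfold AbsolutelyContinuousOnInterval at hg ⊢
  refine squeeze_zero' (.of_forall fun _ ↦ Finset.sum_nonneg fun _ _ ↦ dist_nonneg) ?_
    (by simpa using hg.const_mul K)
  rw [eventually_inf_principal]
  filter_upwards with ⟨n, I⟩ hI
  rw [Finset.mul_sum]
  exact Finset.sum_le_sum fun i hi ↦ h _ (hI.1 i hi).1 _ (hI.1 i hi).2

theorem IntervalIntegrable.absolutelyContinuousOnInterval_integral {E : Type*}
    [NormedAddCommGroup E] [NormedSpace ℝ E] {q : ℝ → E} {a b c : ℝ}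
    (hq : IntervalIntegrable q volume a b) (hc : c ∈ uIcc a b) :
    AbsolutelyContinuousOnInterval (fun x ↦ ∫ v in c..x, q v) a b := by
  refine (hq.norm.absolutelyContinuousOnInterval_intervalIntegral hc).of_dist_le_mul (K := 1)
    fun x hx y hy ↦ ?_
  have hint : ∀ z ∈ uIcc a b, IntervalIntegrable q volume c z := fun z hz ↦
    hq.mono_set (uIcc_subset_uIcc hc hz)
  rw [one_mul, dist_eq_norm, dist_eq_norm, Real.norm_eq_abs,
    intervalIntegral.integral_interval_sub_left (hint x hx) (hint y hy),
    intervalIntegral.integral_interval_sub_left (hint x hx).norm (hint y hy).norm]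
  exact intervalIntegral.norm_integral_le_abs_integral_norm

theorem AbsolutelyContinuousOnInterval.norm_sq {E : Type*} [SeminormedAddCommGroup E]
    {g : ℝ → E} {a b : ℝ} (hg : AbsolutelyContinuousOnInterval g a b) :
    AbsolutelyContinuousOnInterval (fun x ↦ ‖g x‖ ^ 2) a b := by
  obtain ⟨B, hB⟩ := hg.exists_bound
  refine hg.of_dist_le_mul (K := 2 * B) fun x hx y hy ↦ ?_
  rw [Real.dist_eq, dist_eq_norm, sq_sub_sq, abs_mul]
  have hsum : |‖g x‖ + ‖g y‖| ≤ 2 * B := by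
    rw [abs_of_nonneg (by positivity)]; linarith [hB x hx, hB y hy]
  exact mul_le_mul hsum (abs_norm_sub_norm_le _ _) (abs_nonneg _) ((abs_nonneg _).trans hsum)

section Gronwall

variable {E : Type*} [NormedAddCommGroup E] [InnerProductSpace ℝ E] [CompleteSpace E]

theorem ae_hasDerivAt_of_eq_add_integral {g q : ℝ → E} {a b : ℝ}
    (hq : IntervalIntegrable q volume a b) (hg : ∀ x ∈ Icc a b, g x = g a + ∫ v in a..x, q v) :
    ∀ᵐ x, x ∈ Ioo a b → HasDerivAt g (q x) x := by
  filter_upwards [hq.ae_hasDerivAt_integral] with x hx hxab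
  have hab : a ≤ b := (hxab.1.trans hxab.2).le
  have hI : HasDerivAt (fun y ↦ ∫ v in a..y, q v) (q x) x :=
    hx (Icc_subset_uIcc (Ioo_subset_Icc_self hxab)) a left_mem_uIcc
  refine (hI.const_add (g a)).congr_of_eventuallyEq ?_
  filter_upwards [Ioo_mem_nhds hxab.1 hxab.2] with y hy using hg y (Ioo_subset_Icc_self hy)

theorem norm_le_exp_mul_of_inner_le {g q : ℝ → E} {a b β : ℝ} (hab : a ≤ b)
    (hq : IntervalIntegrable q volume a b) (hg : ∀ x ∈ Icc a b, g x = g a + ∫ v in a..x, q v)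
    (hineq : ∀ᵐ x, x ∈ Ioo a b → ⟪q x, g x⟫ ≤ β * ‖g x‖ ^ 2) :
    ‖g b‖ ≤ Real.exp (β * (b - a)) * ‖g a‖ := by
  have hg_ac : AbsolutelyContinuousOnInterval g a b := by
    refine (hq.absolutelyContinuousOnInterval_integral left_mem_uIcc).of_dist_le_mul (K := 1)
      fun x hx y hy ↦ ?_
    rw [uIcc_of_le hab] at hx hy
    rw [hg x hx, hg y hy, dist_add_left, one_mul]
  set φ : ℝ → ℝ := fun x ↦ Real.exp (-(2 * β) * x) * ‖g x‖ ^ 2 with hφ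
  have hφ_ac : AbsolutelyContinuousOnInterval φ a b :=
    (ContDiffOn.absolutelyContinuousOnInterval (by fun_prop)).mul hg_ac.norm_sq
  have hφ' : ∀ᵐ x, x ∈ Ioo a b → deriv φ x ≤ 0 := by
    filter_upwards [ae_hasDerivAt_of_eq_add_integral hq hg, hineq] with x hder hx hxab
    have hφx : HasDerivAt φ
        (Real.exp (-(2 * β) * x) * (2 * (⟪q x, g x⟫ - β * ‖g x‖ ^ 2))) x := by
      refine (((hasDerivAt_id x).const_mul (-(2 * β))).exp.mul
        (hder hxab).norm_sq).congr_deriv ?_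
      rw [real_inner_comm, id]
      ring
    rw [hφx.deriv]
    exact mul_nonpos_of_nonneg_of_nonpos (Real.exp_nonneg _) (by linarith [hx hxab])
  have hφ_le : φ b ≤ φ a := by
    have h := hφ_ac.integral_deriv_eq_sub
    rw [intervalIntegral.integral_of_le hab, integral_Ioc_eq_integral_Ioo] at h
    linarith [integral_nonpos_of_ae ((ae_restrict_iff' measurableSet_Ioo).2 hφ')]
  have hsq : ‖g b‖ ^ 2 ≤ (Real.exp (β * (b - a)) * ‖g a‖) ^ 2 :=
    calc ‖g b‖ ^ 2 = Real.exp (2 * β * b) * φ b := by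
          rw [hφ, ← mul_assoc, ← Real.exp_add, neg_mul, add_neg_cancel, Real.exp_zero, one_mul]
      _ ≤ Real.exp (2 * β * b) * φ a := by gcongr
      _ = (Real.exp (β * (b - a)) * ‖g a‖) ^ 2 := by
          rw [hφ, mul_pow, ← Real.exp_nat_mul, ← mul_assoc, ← Real.exp_add]; ring_nf
  exact le_of_pow_le_pow_left₀ two_ne_zero (by positivity) hsq

end Gronwall

section ProxRegular

variable {n : ℕ} {C : Set (EuclideanSpace ℝ (Fin n))}

theorem smul_mem_proxNormalCone {x v : EuclideanSpace ℝ (Fin n)} (hv : v ∈ proxNormalCone C x)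
    {c : ℝ} (hc : 0 < c) : c • v ∈ proxNormalCone C x := by
  obtain ⟨a, ha, h⟩ := hv
  refine ⟨a / c, div_pos ha hc, fun y hy ↦ ?_⟩
  rw [smul_smul, div_mul_cancel₀ _ hc.ne']
  exact h y hy

/-- Rescaling a proximal normal to norm `η` removes the restriction `‖v‖ ≤ η`. -/
theorem IsProxRegular.inner_le {η : ℝ} (hη : 0 < η) (hC : IsProxRegular η C)
    {x y v : EuclideanSpace ℝ (Fin n)} (hx : x ∈ C) (hy : y ∈ C)
    (hv : v ∈ proxNormalCone C x) :
    ⟪v, y - x⟫ ≤ ‖v‖ / (2 * η) * ‖y - x‖ ^ 2 := by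
  rcases eq_or_ne v 0 with rfl | hv0
  · simp
  have hvn : 0 < ‖v‖ := norm_pos_iff.2 hv0
  set w := (η / ‖v‖) • v with hw
  have hwn : ‖w‖ = η := by
    rw [norm_smul, Real.norm_of_nonneg (by positivity), div_mul_cancel₀ _ hvn.ne']
  have hvw : v = (‖v‖ / η) • w := by
    rw [hw, smul_smul, div_mul_div_cancel₀ hη.ne', div_self hvn.ne', one_smul]
  have h := hC x hx w (smul_mem_proxNormalCone hv (by positivity)) hwn.le y hy
  calc ⟪v, y - x⟫ = ‖v‖ / η * ⟪w, y - x⟫ := by rw [hvw, real_inner_smul_left, ← hvw]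
    _ ≤ ‖v‖ / η * (‖w‖ / (2 * η) * ‖y - x‖ ^ 2) := by gcongr
    _ = ‖v‖ / (2 * η) * ‖y - x‖ ^ 2 := by rw [hwn]; field_simp

theorem IsProxRegular.inner_sub_le {η m : ℝ} (hη : 0 < η) (hC : IsProxRegular η C)
    {x₁ x₂ v₁ v₂ : EuclideanSpace ℝ (Fin n)} (hx₁ : x₁ ∈ C) (hx₂ : x₂ ∈ C)
    (hv₁ : v₁ ∈ proxNormalCone C x₁) (hv₂ : v₂ ∈ proxNormalCone C x₂)
    (hm₁ : ‖v₁‖ ≤ m) (hm₂ : ‖v₂‖ ≤ m) :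
    ⟪v₂ - v₁, x₁ - x₂⟫ ≤ m / η * ‖x₁ - x₂‖ ^ 2 := by
  have h₁ := hC.inner_le hη hx₁ hx₂ hv₁
  have h₂ := hC.inner_le hη hx₂ hx₁ hv₂
  rw [← neg_sub x₁ x₂, norm_neg, inner_neg_right] at h₁
  have hm : ∀ v : EuclideanSpace ℝ (Fin n), ‖v‖ ≤ m →
      ‖v‖ / (2 * η) * ‖x₁ - x₂‖ ^ 2 ≤ m / (2 * η) * ‖x₁ - x₂‖ ^ 2 := fun v hv ↦ by gcongr
  have hsplit : m / (2 * η) * ‖x₁ - x₂‖ ^ 2 + m / (2 * η) * ‖x₁ - x₂‖ ^ 2 =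
      m / η * ‖x₁ - x₂‖ ^ 2 := by field_simp; ring
  rw [inner_sub_left]
  linarith [hm _ hm₁, hm _ hm₂]

/-- `dᵢ` is the velocity and `Fᵢ` the perturbation at the state `xᵢ` of the sweeping process
`-ẋ ∈ N(C, x) + F`. -/
theorem IsProxRegular.inner_velocity_sub_le {η α m : ℝ} (hη : 0 < η) (hC : IsProxRegular η C)
    {x₁ x₂ d₁ d₂ F₁ F₂ : EuclideanSpace ℝ (Fin n)} (hx₁ : x₁ ∈ C) (hx₂ : x₂ ∈ C)
    (h₁ : -d₁ - F₁ ∈ proxNormalCone C x₁) (h₂ : -d₂ - F₂ ∈ proxNormalCone C x₂)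
    (hm₁ : ‖d₁ + F₁‖ ≤ m) (hm₂ : ‖d₂ + F₂‖ ≤ m)
    (hF : α * ‖x₁ - x₂‖ ^ 2 ≤ ⟪F₁ - F₂, x₁ - x₂⟫) :
    ⟪d₁ - d₂, x₁ - x₂⟫ ≤ (m - η * α) / η * ‖x₁ - x₂‖ ^ 2 := by
  have hnorm : ∀ d F : EuclideanSpace ℝ (Fin n), ‖-d - F‖ = ‖d + F‖ := fun d F ↦ by
    rw [← norm_neg, neg_sub, sub_neg_eq_add, add_comm]
  have h := hC.inner_sub_le hη hx₁ hx₂ h₁ h₂ ((hnorm _ _).trans_le hm₁)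
    ((hnorm _ _).trans_le hm₂)
  have hd : d₁ - d₂ = (-d₂ - F₂ - (-d₁ - F₁)) - (F₁ - F₂) := by abel
  rw [hd, inner_sub_left]
  calc _ ≤ m / η * ‖x₁ - x₂‖ ^ 2 - α * ‖x₁ - x₂‖ ^ 2 := by linarith
    _ = (m - η * α) / η * ‖x₁ - x₂‖ ^ 2 := by field_simp

end ProxRegular

theorem IsSweepingSolutionOn.intervalIntegrable {n : ℕ} {C : ℝ → Set (EuclideanSpace ℝ (Fin n))}
    {f : ℝ → EuclideanSpace ℝ (Fin n) → EuclideanSpace ℝ (Fin n)}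
    {x xd : ℝ → EuclideanSpace ℝ (Fin n)} {I : Set ℝ} [I.OrdConnected]
    (hx : IsSweepingSolutionOn C f x xd I) {s t : ℝ} (hs : s ∈ I) (ht : t ∈ I) :
    IntervalIntegrable xd volume s t :=
  (hx.2.1.integrableOn_compact_subset (Set.OrdConnected.uIcc_subset ‹_› hs ht)
    isCompact_uIcc).intervalIntegrable

theorem sweeping_process_contraction_general {n : ℕ}
    (C : ℝ → Set (EuclideanSpace ℝ (Fin n)))
    (f : ℝ → EuclideanSpace ℝ (Fin n) → EuclideanSpace ℝ (Fin n))
    (η L_C M_f α : ℝ) (hη : 0 < η)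
    (hprox : ∀ t, IsProxRegular η (C t))
    (hmono : ∀ t x₁ x₂, α * ‖x₁ - x₂‖ ^ 2 ≤ ⟪f t x₁ - f t x₂, x₁ - x₂⟫)
    (τ : ℝ) (x₁ xd₁ x₂ xd₂ : ℝ → EuclideanSpace ℝ (Fin n))
    (hx₁ : IsSweepingSolutionOn C f x₁ xd₁ (Set.Ici τ))
    (hx₂ : IsSweepingSolutionOn C f x₂ xd₂ (Set.Ici τ))
    (hbd₁ : ∀ᵐ t ∂(volume : Measure ℝ), τ < t → ‖xd₁ t + f t (x₁ t)‖ ≤ M_f + L_C)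
    (hbd₂ : ∀ᵐ t ∂(volume : Measure ℝ), τ < t → ‖xd₂ t + f t (x₂ t)‖ ≤ M_f + L_C) :
    ∀ t, τ < t →
      ‖x₁ t - x₂ t‖ ≤ Real.exp (((M_f + L_C - η * α) / η) * (t - τ)) * ‖x₁ τ - x₂ τ‖ := by
  intro t ht
  have hτ : τ ∈ Ici τ := le_refl τ
  have hint₁ : ∀ u ∈ Ici τ, IntervalIntegrable xd₁ volume τ u := fun u ↦ hx₁.intervalIntegrable hτ
  have hint₂ : ∀ u ∈ Ici τ, IntervalIntegrable xd₂ volume τ u := fun u ↦ hx₂.intervalIntegrable hτ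
  obtain ⟨hC₁, -, heq₁, hN₁⟩ := hx₁
  obtain ⟨hC₂, -, heq₂, hN₂⟩ := hx₂
  refine norm_le_exp_mul_of_inner_le (g := fun u ↦ x₁ u - x₂ u) ht.le
    ((hint₁ t ht.le).sub (hint₂ t ht.le)) (fun u hu ↦ ?_) ?_
  · rw [intervalIntegral.integral_sub (hint₁ u hu.1) (hint₂ u hu.1), ← heq₁ τ hτ u hu.1,
      ← heq₂ τ hτ u hu.1]
    abel
  · filter_upwards [hN₁, hN₂, hbd₁, hbd₂] with u h₁ h₂ hm₁ hm₂ hu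
    have hu' : u ∈ Ici τ := hu.1.le
    exact (hprox u).inner_velocity_sub_le hη (hC₁ u hu') (hC₂ u hu') (h₁ hu') (h₂ hu')
      (hm₁ hu.1) (hm₂ hu.1) (hmono u _ _)

/-- Contraction estimate between any two solutions of the sweeping process under strong
monotonicity, uniform boundedness of the perturbation, and the velocity bound. -/
theorem sweeping_process_contraction {n : ℕ}
    (C : ℝ → Set (EuclideanSpace ℝ (Fin n)))
    (f : ℝ → EuclideanSpace ℝ (Fin n) → EuclideanSpace ℝ (Fin n))
    (η L_C L_f M_f α : ℝ) (hη : 0 < η) (hL_C : 0 < L_C) (hL_f : 0 < L_f)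
    (hM_f : 0 ≤ M_f) (hα : 0 < α)
    (hne : ∀ t, (C t).Nonempty) (hcl : ∀ t, IsClosed (C t))
    (hprox : ∀ t, IsProxRegular η (C t))
    (hCLip : ∀ t₁ t₂, hausdorffDist (C t₁) (C t₂) ≤ L_C * |t₁ - t₂|)
    (hfLip : ∀ t₁ t₂ x₁ x₂, ‖f t₁ x₁ - f t₂ x₂‖ ≤ L_f * |t₁ - t₂| + L_f * ‖x₁ - x₂‖)
    (hfbd : ∀ t s x, x ∈ C s → ‖f t x‖ ≤ M_f)
    (hmono : ∀ t x₁ x₂, α * ‖x₁ - x₂‖ ^ 2 ≤ ⟪f t x₁ - f t x₂, x₁ - x₂⟫)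
    (τ : ℝ) (x₁ xd₁ x₂ xd₂ : ℝ → EuclideanSpace ℝ (Fin n))
    (hx₁ : IsSweepingSolutionOn C f x₁ xd₁ (Set.Ici τ))
    (hx₂ : IsSweepingSolutionOn C f x₂ xd₂ (Set.Ici τ))
    (hx₁τ : x₁ τ ∈ C τ) (hx₂τ : x₂ τ ∈ C τ)
    (hbd₁ : ∀ᵐ t ∂(volume : Measure ℝ), τ < t → ‖xd₁ t + f t (x₁ t)‖ ≤ M_f + L_C)
    (hbd₂ : ∀ᵐ t ∂(volume : Measure ℝ), τ < t → ‖xd₂ t + f t (x₂ t)‖ ≤ M_f + L_C) :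
    ∀ t, τ < t →
      ‖x₁ t - x₂ t‖ ≤ Real.exp (((M_f + L_C - η * α) / η) * (t - τ)) * ‖x₁ τ - x₂ τ‖ :=
  sweeping_process_contraction_general C f η L_C M_f α hη hprox hmono τ x₁ xd₁ x₂ xd₂ hx₁ hx₂ hbd₁
    hbd₂
end
end

section
/- Let C ⊆ ℝⁿ be a nonempty closed η-prox-regular set and let f : ℝ × ℝⁿ → ℝⁿ be strongly monotone with constant α > 0, i.e. ⟨f(t,x₁) − f(t,x₂), x₁ − x₂⟩ ≥ α‖x₁ − x₂‖² for all t, x₁, x₂. Fix t ∈ ℝ, constants M_f, L_C ≥ 0 with M_f + L_C > 0, points x₁, x₂ ∈ C and vectors w₁, w₂ ∈ ℝⁿ such that −wᵢ − f(t,xᵢ) ∈ N(C,xᵢ) and ‖wᵢ + f(t,xᵢ)‖ ≤ M_f + L_C for i = 1,2. Then ⟨w₁ − w₂, x₁ − x₂⟩ ≤ ((M_f + L_C)/η − α)‖x₁ − x₂‖². -/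
/-
Proximal normals form a cone, so every nonzero normal `v` rescales to one of norm exactly `η`;
prox-regularity applied to the rescaled normal gives `⟪v, y - x⟫ ≤ ‖v‖/(2η) ‖y - x‖²` for
normals of any size. Adding this inequality at `x₁` and at `x₂` shows that normals of norm at
most `M` are `M/η`-hypomonotone, and strong monotonicity of `f` absorbs the term `f(t,xᵢ)`.
-/

noncomputable section
open MeasureTheory Metric Set Filter
open scoped RealInnerProductSpace

variable {n : ℕ} {C : Set (EuclideanSpace ℝ (Fin n))} {x x' y v v' : EuclideanSpace ℝ (Fin n)}

theorem smul_mem_proxNormalCone_s2 (hv : v ∈ proxNormalCone C x) {s : ℝ} (hs : 0 < s) :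
    s • v ∈ proxNormalCone C x := by
  obtain ⟨a, ha, hnearest⟩ := hv
  refine ⟨a / s, div_pos ha hs, fun c hc => ?_⟩
  rw [smul_smul, div_mul_cancel₀ _ hs.ne']
  exact hnearest c hc

namespace IsProxRegular

variable {η : ℝ} (hη : 0 < η) (hC : IsProxRegular η C)
include hη hC

theorem inner_le_s2 (hx : x ∈ C) (hv : v ∈ proxNormalCone C x) (hy : y ∈ C) :
    ⟪v, y - x⟫ ≤ ‖v‖ / (2 * η) * ‖y - x‖ ^ 2 := by
  rcases eq_or_ne v 0 with rfl | hv0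
  · simp
  have hnv : 0 < ‖v‖ := norm_pos_iff.mpr hv0
  have hs : 0 < η / ‖v‖ := div_pos hη hnv
  have hnorm : ‖(η / ‖v‖) • v‖ = η := by
    rw [norm_smul, Real.norm_of_nonneg hs.le, div_mul_cancel₀ _ hnv.ne']
  have hscaled := hC x hx _ (smul_mem_proxNormalCone_s2 hv hs) hnorm.le y hy
  rw [real_inner_smul_left, hnorm] at hscaled
  calc ⟪v, y - x⟫ = ‖v‖ / η * (η / ‖v‖ * ⟪v, y - x⟫) := by field_simp
    _ ≤ ‖v‖ / η * (η / (2 * η) * ‖y - x‖ ^ 2) := by gcongr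
    _ = ‖v‖ / (2 * η) * ‖y - x‖ ^ 2 := by field_simp

theorem hypomonotone (hx : x ∈ C) (hx' : x' ∈ C) (hv : v ∈ proxNormalCone C x)
    (hv' : v' ∈ proxNormalCone C x') {M : ℝ} (hvM : ‖v‖ ≤ M) (hv'M : ‖v'‖ ≤ M) :
    -(M / η * ‖x - x'‖ ^ 2) ≤ ⟪v - v', x - x'⟫ := by
  have h : ⟪v, x' - x⟫ ≤ M / (2 * η) * ‖x - x'‖ ^ 2 := by
    rw [norm_sub_rev x]
    exact (hC.inner_le_s2 hη hx hv hx').trans (by gcongr)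
  have h' : ⟪v', x - x'⟫ ≤ M / (2 * η) * ‖x - x'‖ ^ 2 :=
    (hC.inner_le_s2 hη hx' hv' hx).trans (by gcongr)
  have hrev : ⟪v, x' - x⟫ = -⟪v, x - x'⟫ := by rw [← inner_neg_right, neg_sub]
  rw [inner_sub_left]
  linarith [show M / η * ‖x - x'‖ ^ 2 = 2 * (M / (2 * η) * ‖x - x'‖ ^ 2) by field_simp]

end IsProxRegular

theorem hypomonotonicity_estimate_general {n : ℕ}
    (C : Set (EuclideanSpace ℝ (Fin n))) (η : ℝ) (hη : 0 < η)
    (hprox : IsProxRegular η C)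
    (f : ℝ → EuclideanSpace ℝ (Fin n) → EuclideanSpace ℝ (Fin n))
    (α : ℝ)
    (hmono : ∀ t x₁ x₂, α * ‖x₁ - x₂‖ ^ 2 ≤ ⟪f t x₁ - f t x₂, x₁ - x₂⟫)
    (t : ℝ) (M_f L_C : ℝ)
    (x₁ x₂ : EuclideanSpace ℝ (Fin n)) (hx₁ : x₁ ∈ C) (hx₂ : x₂ ∈ C)
    (w₁ w₂ : EuclideanSpace ℝ (Fin n))
    (hw₁ : -w₁ - f t x₁ ∈ proxNormalCone C x₁)
    (hw₂ : -w₂ - f t x₂ ∈ proxNormalCone C x₂)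
    (hb₁ : ‖w₁ + f t x₁‖ ≤ M_f + L_C) (hb₂ : ‖w₂ + f t x₂‖ ≤ M_f + L_C) :
    ⟪w₁ - w₂, x₁ - x₂⟫ ≤ ((M_f + L_C) / η - α) * ‖x₁ - x₂‖ ^ 2 := by
  have hnorm (w z : EuclideanSpace ℝ (Fin n)) : ‖-w - z‖ = ‖w + z‖ := by
    rw [← norm_neg, neg_sub, sub_neg_eq_add, add_comm]
  have hhypo := hprox.hypomonotone hη hx₁ hx₂ hw₁ hw₂
    ((hnorm _ _).trans_le hb₁) ((hnorm _ _).trans_le hb₂)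
  have hsplit : ⟪(-w₁ - f t x₁) - (-w₂ - f t x₂), x₁ - x₂⟫
      = -⟪w₁ - w₂, x₁ - x₂⟫ - ⟪f t x₁ - f t x₂, x₁ - x₂⟫ := by
    rw [← inner_neg_left, ← inner_sub_left]
    congr 1
    abel
  linarith [hmono t x₁ x₂]

/-- Pointwise monotonicity estimate coming from hypomonotonicity of the proximal normal cone
of an η-prox-regular set combined with strong monotonicity of the perturbation. -/
theorem hypomonotonicity_estimate {n : ℕ}
    (C : Set (EuclideanSpace ℝ (Fin n))) (η : ℝ) (hη : 0 < η)
    (hne : C.Nonempty) (hcl : IsClosed C) (hprox : IsProxRegular η C)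
    (f : ℝ → EuclideanSpace ℝ (Fin n) → EuclideanSpace ℝ (Fin n))
    (α : ℝ) (hα : 0 < α)
    (hmono : ∀ t x₁ x₂, α * ‖x₁ - x₂‖ ^ 2 ≤ ⟪f t x₁ - f t x₂, x₁ - x₂⟫)
    (t : ℝ) (M_f L_C : ℝ) (hM_f : 0 ≤ M_f) (hL_C : 0 ≤ L_C) (hpos : 0 < M_f + L_C)
    (x₁ x₂ : EuclideanSpace ℝ (Fin n)) (hx₁ : x₁ ∈ C) (hx₂ : x₂ ∈ C)
    (w₁ w₂ : EuclideanSpace ℝ (Fin n))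
    (hw₁ : -w₁ - f t x₁ ∈ proxNormalCone C x₁)
    (hw₂ : -w₂ - f t x₂ ∈ proxNormalCone C x₂)
    (hb₁ : ‖w₁ + f t x₁‖ ≤ M_f + L_C) (hb₂ : ‖w₂ + f t x₂‖ ≤ M_f + L_C) :
    ⟪w₁ - w₂, x₁ - x₂⟫ ≤ ((M_f + L_C) / η - α) * ‖x₁ - x₂‖ ^ 2 :=
  hypomonotonicity_estimate_general C η hη hprox f α hmono t M_f L_C x₁ x₂ hx₁ hx₂ w₁ w₂ hw₁ hw₂ hb₁
    hb₂
end
end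

section
/- Let b ≥ 1 be a real number. Then there exists exactly one point (p, q) ∈ ℝ² with q ≥ 0 satisfying both (p + 1.5)² + q² = 1 and p² + q²/b² = 1 (i.e. the circle of radius 1 centered at (−1.5, 0) and the ellipse x² + y²/b² = 1 intersect in a unique point with nonnegative second coordinate); moreover, this point satisfies p ≤ −3/4 and q > 0. -/
/-!
Eliminating `q` between the two equations leaves the quadratic
`f(p) = (b² - 1) p² - 3p - (b² + 5/4) = 0`. For `b ≥ 1` this `f` is strictly decreasing on
`p ≤ 0`, and every point of the circle has `p ≤ -1/2`, so the abscissa of an intersection point is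
unique; it lies in `[-1, -3/4]` because `f(-1) = 3/4 > 0 ≥ 7 (1 - b²)/16 = f(-3/4)`. On the circle,
the ordinate `q ≥ 0` is determined by `p`.
-/

noncomputable def intersectionQuadratic (b p : ℝ) : ℝ := (b ^ 2 - 1) * p ^ 2 - 3 * p - (b ^ 2 + 5 / 4)

lemma ellipse_iff_intersectionQuadratic_eq_zero {b p q : ℝ} (hb : b ≠ 0)
    (hc : (p + 1.5) ^ 2 + q ^ 2 = 1) :
    p ^ 2 + q ^ 2 / b ^ 2 = 1 ↔ intersectionQuadratic b p = 0 := by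
  have hq : q ^ 2 = 1 - (p + 1.5) ^ 2 := by linarith
  rw [hq, intersectionQuadratic, ← sub_eq_zero]
  constructor <;> intro h
  · field_simp at h
    linear_combination h
  · field_simp
    linear_combination h

lemma intersectionQuadratic_strictAntiOn {b : ℝ} (hb : 1 ≤ b ^ 2) :
    StrictAntiOn (intersectionQuadratic b) (Set.Iic 0) := by
  intro x hx y hy hxy
  simp only [Set.mem_Iic] at hx hy
  have hfactor : intersectionQuadratic b x - intersectionQuadratic b y
      = (y - x) * (3 - (b ^ 2 - 1) * (x + y)) := by
    unfold intersectionQuadratic; ring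
  have : 0 < (y - x) * (3 - (b ^ 2 - 1) * (x + y)) :=
    mul_pos (by linarith) (by nlinarith [mul_nonneg (sub_nonneg.2 hb) (by linarith : 0 ≤ -(x + y))])
  linarith

lemma intersectionQuadratic_neg_three_quarters_nonpos {b : ℝ} (hb : 1 ≤ b ^ 2) :
    intersectionQuadratic b (-3 / 4) ≤ 0 := by
  unfold intersectionQuadratic; linarith

lemma le_neg_half_of_mem_circle {p q : ℝ} (hc : (p + 1.5) ^ 2 + q ^ 2 = 1) : p ≤ -1 / 2 := by
  nlinarith [sq_nonneg q]

lemma le_neg_three_quarters_of_intersectionQuadratic_eq_zero {b p : ℝ} (hb : 1 ≤ b ^ 2)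
    (hp : p ≤ 0) (hroot : intersectionQuadratic b p = 0) : p ≤ -3 / 4 := by
  by_contra! h
  have := intersectionQuadratic_strictAntiOn hb (by norm_num : (-3 / 4 : ℝ) ∈ Set.Iic 0) hp h
  linarith [intersectionQuadratic_neg_three_quarters_nonpos hb]

lemma exists_intersectionQuadratic_eq_zero {b : ℝ} (hb : 1 ≤ b ^ 2) :
    ∃ p ∈ Set.Icc (-1 : ℝ) (-3 / 4), intersectionQuadratic b p = 0 := by
  have hcont : ContinuousOn (intersectionQuadratic b) (Set.Icc (-1) (-3 / 4)) := by
    unfold intersectionQuadratic; fun_prop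
  refine intermediate_value_Icc' (by norm_num) hcont
    ⟨intersectionQuadratic_neg_three_quarters_nonpos hb, ?_⟩
  norm_num [intersectionQuadratic]
  linarith

lemma pos_of_mem_circle_of_mem_ellipse {b p q : ℝ} (hq : 0 ≤ q)
    (hc : (p + 1.5) ^ 2 + q ^ 2 = 1) (he : p ^ 2 + q ^ 2 / b ^ 2 = 1) : 0 < q := by
  refine hq.lt_of_ne ?_
  rintro rfl
  norm_num at hc he
  rcases he with rfl | rfl <;> norm_num at hc

lemma eq_sqrt_of_mem_circle {p q : ℝ} (hq : 0 ≤ q) (hc : (p + 1.5) ^ 2 + q ^ 2 = 1) :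
    q = √(1 - (p + 1.5) ^ 2) := by
  rw [← hc, add_sub_cancel_left, Real.sqrt_sq hq]

/-- The circle of radius 1 centered at (-1.5, 0) and the ellipse x² + y²/b² = 1 (b ≥ 1)
intersect in a unique point with nonnegative second coordinate; that point satisfies
p ≤ -3/4 and q > 0. -/
theorem circle_ellipse_unique_intersection (b : ℝ) (hb : 1 ≤ b) :
    (∃! pq : ℝ × ℝ, 0 ≤ pq.2 ∧
      (pq.1 + 1.5) ^ 2 + pq.2 ^ 2 = 1 ∧ pq.1 ^ 2 + pq.2 ^ 2 / b ^ 2 = 1) ∧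
    (∀ p q : ℝ, 0 ≤ q → (p + 1.5) ^ 2 + q ^ 2 = 1 → p ^ 2 + q ^ 2 / b ^ 2 = 1 →
      p ≤ -3 / 4 ∧ 0 < q) := by
  have hb2 : 1 ≤ b ^ 2 := one_le_pow₀ hb
  have hb0 : b ≠ 0 := by positivity
  have abscissa_root {p q : ℝ} (hc : (p + 1.5) ^ 2 + q ^ 2 = 1)
      (he : p ^ 2 + q ^ 2 / b ^ 2 = 1) : p ≤ 0 ∧ intersectionQuadratic b p = 0 :=
    ⟨by linarith [le_neg_half_of_mem_circle hc],
      (ellipse_iff_intersectionQuadratic_eq_zero hb0 hc).1 he⟩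
  refine ⟨?_, fun p q hq hc he ↦
    ⟨le_neg_three_quarters_of_intersectionQuadratic_eq_zero hb2 (abscissa_root hc he).1
      (abscissa_root hc he).2, pos_of_mem_circle_of_mem_ellipse hq hc he⟩⟩
  obtain ⟨p, ⟨hp1, hp34⟩, hroot⟩ := exists_intersectionQuadratic_eq_zero hb2
  have hc : (p + 1.5) ^ 2 + √(1 - (p + 1.5) ^ 2) ^ 2 = 1 := by
    rw [Real.sq_sqrt (by nlinarith)]; ring
  refine ⟨(p, √(1 - (p + 1.5) ^ 2)),
    ⟨Real.sqrt_nonneg _, hc, (ellipse_iff_intersectionQuadratic_eq_zero hb0 hc).2 hroot⟩, ?_⟩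
  rintro ⟨p', q'⟩ ⟨hq', hc', he'⟩
  simp only at hq' hc' he'
  obtain ⟨hp'0, hroot'⟩ := abscissa_root hc' he'
  obtain rfl : p' = p := (intersectionQuadratic_strictAntiOn hb2).injOn hp'0
    (show p ≤ 0 by linarith) (hroot'.trans hroot.symm)
  rw [eq_sqrt_of_mem_circle hq' hc']
end

section
/- Let β ≥ 1 and let b : ℝ → ℝ be a C¹ function with b(t) ≥ β and |b′(t)| ≤ L_b for all t. For each t let (p(t), q(t)) be the unique point with q(t) ≥ 0 lying on both the circle (p+1.5)² + q² = 1 and the ellipse p² + q²/b(t)² = 1. Then the functions p and q are differentiable on ℝ and satisfy |p′(t)| ≤ 4L_b/(3β³) and |q′(t)| ≤ 4L_b/(3β³) for all t ∈ ℝ. -/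
/-!
Eliminating `q` between the circle and the ellipse leaves the quadratic
`(b² - 1) p² - 3 p - b² - 5/4 = 0`, whose only nonpositive root is an explicit smooth function
`X b`; hence `p = X ∘ b`, `q = Y ∘ b` with `Y = √(1 - (X + 3/2)²)`, and everything reduces to
`|X'|, |Y'| ≤ 4 / (3 x³)` for `x ≥ 1`. Differentiating the quadratic implicitly gives
`X' · x D = -2 Y²` and `Y' · x D = 2 (X + 3/2) Y` with `D = 3 - 2 (x² - 1) X`. Since `X ≤ -3/4`,
`x D ≥ 3 x³ / 2`, while both right-hand sides are at most `2` in absolute value because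
`(X + 3/2)² + Y² = 1`.
-/

noncomputable def abscissaQuadratic (x y : ℝ) : ℝ := (x ^ 2 - 1) * y ^ 2 - 3 * y - x ^ 2 - 5 / 4

/-- The root `(3 - s) / (2 (x² - 1))`, `s = √(4 x⁴ + x² + 4)`, of `abscissaQuadratic x`,
rationalized so that it stays smooth across `x = ±1`. -/
noncomputable def intersectionAbscissa (x : ℝ) : ℝ :=
  -(4 * x ^ 2 + 5) / (2 * (3 + √(4 * x ^ 4 + x ^ 2 + 4)))

noncomputable def intersectionOrdinate (x : ℝ) : ℝ :=
  √(1 - (intersectionAbscissa x + 3 / 2) ^ 2)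

local notation "X" => intersectionAbscissa
local notation "Y" => intersectionOrdinate

lemma abscissaQuadratic_eq_zero_of_circle_of_ellipse {b p q : ℝ} (hb : b ≠ 0)
    (hcircle : (p + 3 / 2) ^ 2 + q ^ 2 = 1) (hellipse : p ^ 2 + q ^ 2 / b ^ 2 = 1) :
    abscissaQuadratic b p = 0 := by
  have hq : q ^ 2 = b ^ 2 * (1 - p ^ 2) := by
    field_simp at hellipse
    linarith
  unfold abscissaQuadratic
  linear_combination -hcircle + hq

lemma abscissaQuadratic_intersectionAbscissa (x : ℝ) : abscissaQuadratic x (X x) = 0 := by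
  have hs := Real.sq_sqrt (show 0 ≤ 4 * x ^ 4 + x ^ 2 + 4 by positivity)
  have hden : 3 + √(4 * x ^ 4 + x ^ 2 + 4) ≠ 0 := by positivity
  unfold abscissaQuadratic intersectionAbscissa
  set s := √(4 * x ^ 4 + x ^ 2 + 4)
  field_simp
  linear_combination (-(16 * x ^ 2 + 20)) * hs

lemma intersectionAbscissa_nonpos (x : ℝ) : X x ≤ 0 :=
  div_nonpos_of_nonpos_of_nonneg (by nlinarith [sq_nonneg x]) (by positivity)

lemma differentiable_intersectionAbscissa : Differentiable ℝ X := fun x => by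
  have hs : DifferentiableAt ℝ (fun y : ℝ => √(4 * y ^ 4 + y ^ 2 + 4)) x :=
    DifferentiableAt.sqrt (by fun_prop) (by positivity)
  exact (by fun_prop : DifferentiableAt ℝ (fun y : ℝ => -(4 * y ^ 2 + 5)) x).div
    ((hs.const_add 3).const_mul 2) (by positivity)

lemma mem_Icc_of_abscissaQuadratic_eq_zero {x y : ℝ} (hx : 1 ≤ x) (hy : y ≤ 0)
    (h : abscissaQuadratic x y = 0) : y ∈ Set.Icc (-1) (-3 / 4) := by
  unfold abscissaQuadratic at h
  have hx2 : 0 ≤ x ^ 2 - 1 := by nlinarith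
  have hlow : -1 ≤ y := by
    by_contra! hy1
    nlinarith [mul_le_mul_of_nonneg_left (show 1 ≤ y ^ 2 by nlinarith) hx2]
  exact ⟨hlow, by nlinarith [mul_le_mul_of_nonneg_left (show y ^ 2 ≤ 1 by nlinarith) hx2]⟩

lemma eq_of_abscissaQuadratic_eq_zero {x y z : ℝ} (hx : 1 ≤ x) (hy : y ≤ 0) (hz : z ≤ 0)
    (hyx : abscissaQuadratic x y = 0) (hzx : abscissaQuadratic x z = 0) : y = z := by
  unfold abscissaQuadratic at hyx hzx
  have hfactor : (y - z) * ((x ^ 2 - 1) * (y + z) - 3) = 0 := by linear_combination hyx - hzx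
  have hx2 : 0 ≤ x ^ 2 - 1 := by nlinarith
  have hneg : (x ^ 2 - 1) * (y + z) - 3 < 0 := by
    nlinarith [mul_nonpos_of_nonneg_of_nonpos hx2 (add_nonpos hy hz)]
  exact sub_eq_zero.mp ((mul_eq_zero.mp hfactor).resolve_right hneg.ne)

lemma deriv_intersectionAbscissa_mul (x : ℝ) :
    deriv X x * (3 - 2 * (x ^ 2 - 1) * X x) = 2 * x * (X x ^ 2 - 1) := by
  have hX := (differentiable_intersectionAbscissa x).hasDerivAt
  have hF := ((((hasDerivAt_id' (x := x)).fun_pow 2).sub_const 1).fun_mul (hX.fun_pow 2)).fun_sub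
    (hX.const_mul 3) |>.fun_sub ((hasDerivAt_id' (x := x)).fun_pow 2) |>.sub_const (5 / 4)
  have hF0 : HasDerivAt (fun y => (y ^ 2 - 1) * X y ^ 2 - 3 * X y - y ^ 2 - 5 / 4) 0 x :=
    (hasDerivAt_const x 0).congr_of_eventuallyEq
      (.of_forall abscissaQuadratic_intersectionAbscissa)
  have := hF.unique hF0
  simp only [Nat.cast_ofNat, Nat.reduceSub, pow_one, mul_one] at this
  linear_combination -this

lemma abs_le_four_div_of_abs_mul_le {x a c : ℝ} (hx : 0 < x) (hc : 3 / 2 * x ^ 3 ≤ c)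
    (h : |a * c| ≤ 2) : |a| ≤ 4 / (3 * x ^ 3) := by
  have hx3 : 0 < x ^ 3 := by positivity
  rw [le_div_iff₀ (by positivity)]
  rw [abs_mul, abs_of_nonneg (show 0 ≤ c by linarith)] at h
  nlinarith [mul_le_mul_of_nonneg_left hc (abs_nonneg a)]

section

variable {x : ℝ} (hx : 1 ≤ x)
include hx

lemma intersectionAbscissa_mem_Icc : X x ∈ Set.Icc (-1) (-3 / 4) :=
  mem_Icc_of_abscissaQuadratic_eq_zero hx (intersectionAbscissa_nonpos x)
    (abscissaQuadratic_intersectionAbscissa x)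

lemma intersectionOrdinate_radicand_pos : 0 < 1 - (X x + 3 / 2) ^ 2 := by
  have hX := intersectionAbscissa_mem_Icc hx
  nlinarith [hX.1, hX.2]

lemma intersectionOrdinate_sq : Y x ^ 2 = 1 - (X x + 3 / 2) ^ 2 :=
  Real.sq_sqrt (intersectionOrdinate_radicand_pos hx).le

lemma intersectionOrdinate_pos : 0 < Y x :=
  Real.sqrt_pos.2 (intersectionOrdinate_radicand_pos hx)

lemma hasDerivAt_intersectionOrdinate :
    HasDerivAt Y (-(X x + 3 / 2) * deriv X x / Y x) x := by
  have hX := (differentiable_intersectionAbscissa x).hasDerivAt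
  have hY := (((hX.add_const (3 / 2)).fun_pow 2).const_sub 1).sqrt
    (intersectionOrdinate_radicand_pos hx).ne'
  refine hY.congr_deriv ?_
  have hYne := (intersectionOrdinate_pos hx).ne'
  unfold intersectionOrdinate at hYne ⊢
  field_simp
  simp only [Nat.cast_ofNat, Nat.reduceSub, pow_one]
  ring

lemma three_halves_mul_cube_le : 3 / 2 * x ^ 3 ≤ x * (3 - 2 * (x ^ 2 - 1) * X x) := by
  have hX := intersectionAbscissa_mem_Icc hx
  nlinarith [mul_le_mul_of_nonneg_left hX.2 (by nlinarith : 0 ≤ x * (x ^ 2 - 1))]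

lemma deriv_intersectionAbscissa_mul_eq :
    deriv X x * (x * (3 - 2 * (x ^ 2 - 1) * X x)) = -2 * Y x ^ 2 := by
  have hquad := abscissaQuadratic_intersectionAbscissa x
  unfold abscissaQuadratic at hquad
  linear_combination x * deriv_intersectionAbscissa_mul x + 2 * intersectionOrdinate_sq hx
    + 2 * hquad

lemma deriv_intersectionOrdinate_mul_eq :
    deriv Y x * (x * (3 - 2 * (x ^ 2 - 1) * X x)) = 2 * (X x + 3 / 2) * Y x := by
  have hYne := (intersectionOrdinate_pos hx).ne'
  rw [(hasDerivAt_intersectionOrdinate hx).deriv, div_mul_eq_mul_div, mul_assoc,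
    deriv_intersectionAbscissa_mul_eq hx, div_eq_iff hYne]
  ring

lemma abs_deriv_intersectionAbscissa_le : |deriv X x| ≤ 4 / (3 * x ^ 3) := by
  refine abs_le_four_div_of_abs_mul_le (by linarith) (three_halves_mul_cube_le hx) ?_
  rw [deriv_intersectionAbscissa_mul_eq hx, abs_le]
  constructor <;> nlinarith [intersectionOrdinate_sq hx, sq_nonneg (X x + 3 / 2)]

lemma abs_deriv_intersectionOrdinate_le : |deriv Y x| ≤ 4 / (3 * x ^ 3) := by
  refine abs_le_four_div_of_abs_mul_le (by linarith) (three_halves_mul_cube_le hx) ?_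
  rw [deriv_intersectionOrdinate_mul_eq hx, abs_le]
  constructor <;> nlinarith [intersectionOrdinate_sq hx, sq_nonneg (X x + 3 / 2 - Y x),
    sq_nonneg (X x + 3 / 2 + Y x)]

end

lemma abs_deriv_comp_le {f b : ℝ → ℝ} {β L t : ℝ} (hβ : 0 < β) (hbβ : β ≤ b t)
    (hf : DifferentiableAt ℝ f (b t)) (hb : DifferentiableAt ℝ b t)
    (hf' : |deriv f (b t)| ≤ 4 / (3 * b t ^ 3)) (hb' : |deriv b t| ≤ L) :
    |deriv (f ∘ b) t| ≤ 4 * L / (3 * β ^ 3) := by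
  have hL : 0 ≤ L := (abs_nonneg _).trans hb'
  have hbt : 0 < b t := hβ.trans_le hbβ
  rw [deriv_comp t hf hb, abs_mul]
  calc |deriv f (b t)| * |deriv b t| ≤ 4 / (3 * b t ^ 3) * L :=
        mul_le_mul hf' hb' (abs_nonneg _) (by positivity)
    _ ≤ 4 / (3 * β ^ 3) * L := by gcongr
    _ = 4 * L / (3 * β ^ 3) := by ring

/-- The circle–ellipse intersection point functions p, q of the toy example are
differentiable, with derivatives bounded by 4L_b/(3β³). -/
theorem toy_example_intersection_derivative_bounds
    (β L_b : ℝ) (hβ : 1 ≤ β)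
    (b : ℝ → ℝ) (hb : ContDiff ℝ 1 b) (hbβ : ∀ t, β ≤ b t)
    (hb' : ∀ t, |deriv b t| ≤ L_b)
    (p q : ℝ → ℝ)
    (hpq : ∀ t, 0 ≤ q t ∧ (p t + 1.5) ^ 2 + (q t) ^ 2 = 1 ∧
      (p t) ^ 2 + (q t) ^ 2 / (b t) ^ 2 = 1) :
    ∀ t, DifferentiableAt ℝ p t ∧ DifferentiableAt ℝ q t ∧
      |deriv p t| ≤ 4 * L_b / (3 * β ^ 3) ∧ |deriv q t| ≤ 4 * L_b / (3 * β ^ 3) := by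
  have hb1 t : 1 ≤ b t := hβ.trans (hbβ t)
  have hcircle t : (p t + 3 / 2) ^ 2 + q t ^ 2 = 1 := by rw [← (hpq t).2.1]; norm_num
  have hp : p = X ∘ b := funext fun t => by
    have hbt : b t ≠ 0 := (one_pos.trans_le (hb1 t)).ne'
    refine eq_of_abscissaQuadratic_eq_zero (hb1 t) ?_ (intersectionAbscissa_nonpos _)
      (abscissaQuadratic_eq_zero_of_circle_of_ellipse hbt (hcircle t) (hpq t).2.2)
      (abscissaQuadratic_intersectionAbscissa _)
    nlinarith [hcircle t, sq_nonneg (q t)]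
  have hq : q = Y ∘ b := funext fun t => by
    have hpt : X (b t) = p t := (congrFun hp t).symm
    rw [Function.comp_apply, intersectionOrdinate, hpt, ← hcircle t, add_sub_cancel_left,
      Real.sqrt_sq (hpq t).1]
  have hbd : Differentiable ℝ b := hb.differentiable one_ne_zero
  have hβ0 : 0 < β := by linarith
  subst hp hq
  intro t
  have hX := differentiable_intersectionAbscissa (b t)
  have hY := (hasDerivAt_intersectionOrdinate (hb1 t)).differentiableAt
  exact ⟨hX.comp t (hbd t), hY.comp t (hbd t),
    abs_deriv_comp_le hβ0 (hbβ t) hX (hbd t) (abs_deriv_intersectionAbscissa_le (hb1 t))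
      (hb' t),
    abs_deriv_comp_le hβ0 (hbβ t) hY (hbd t) (abs_deriv_intersectionOrdinate_le (hb1 t))
      (hb' t)⟩
end
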